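/- arXiv:1906.10743 — 2 statements merged into one kernel-verified Lean document; each statement's English description precedes it below -/
import Mathlib

section
/- Suppose q : Ω → ℝ is the phase shift function of a finite difference operator D (so that partial Fourier transform of D^j v equals (2πi q(ω))^j v̂(ω)), A is a bounded linear operator on a Banach space X commuting with Fourier-frequency multiplication, and u : ℝ → X is an integrable function satisfying u'(t) + A u(t) = f(t) for all t, so that (2πiω) û(ω) + A û(ω) = f̂(ω). Then v defined by v̂(ω) = 1_Ω(ω) û(q(ω)) satisfies the transformed finite difference equation: for all t, D v(t) + A v(t) = g(t), where g(t) = ∫_Ω e^{2πitω} f̂(q(ω)) dω. -/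
/-!
The exponentials `t ↦ e^{2πitω}` are eigenfunctions of the finite difference operator `D`, with
eigenvalue `2πi q(ω)`. Hence on the Fourier integral `v(t) = ∫_Ω e^{2πitω} û(q ω) dω` the operator
`D` acts as multiplication of the integrand by `2πi q(ω)`, and `A` acts pointwise on it. The
relation `(2πiω) û(ω) + A û(ω) = f̂(ω)`, evaluated at `ω = q(ω)`, then turns the integrand of
`D v + A v` into that of `g`.
-/

open MeasureTheory
open scoped FourierTransform

namespace FiniteDifference

variable {X : Type*} [NormedAddCommGroup X] [NormedSpace ℂ X] {Ω : Set ℝ}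

/-- The inverse Fourier transform of `1_Ω w`. -/
noncomputable def invFourierOn (Ω : Set ℝ) (w : ℝ → X) (t : ℝ) : X :=
  ∫ ω in Ω, Complex.exp (2 * Real.pi * Complex.I * t * ω) • w ω

lemma norm_cexp_two_pi_I_mul_mul (t ω : ℝ) :
    ‖Complex.exp (2 * Real.pi * Complex.I * t * ω)‖ = 1 := by
  rw [show 2 * Real.pi * Complex.I * t * ω = ((2 * Real.pi * t * ω : ℝ) : ℂ) * Complex.I by
    push_cast; ring]
  exact Complex.norm_exp_ofReal_mul_I _

lemma cexp_two_pi_I_mul_add_mul (t s ω : ℝ) :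
    Complex.exp (2 * Real.pi * Complex.I * ((t + s : ℝ) : ℂ) * ω) =
      Complex.exp (2 * Real.pi * Complex.I * t * ω) *
        Complex.exp (2 * Real.pi * Complex.I * s * ω) := by
  rw [← Complex.exp_add]
  congr 1
  push_cast
  ring

lemma _root_.MeasureTheory.IntegrableOn.cexp_two_pi_I_mul_smul {w : ℝ → X}
    (hw : IntegrableOn w Ω) (t : ℝ) :
    IntegrableOn (fun ω : ℝ => Complex.exp (2 * Real.pi * Complex.I * t * ω) • w ω) Ω :=
  hw.bdd_smul (φ := fun ω : ℝ => Complex.exp (2 * Real.pi * Complex.I * t * ω)) 1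
    (Continuous.aestronglyMeasurable (by fun_prop))
    (Filter.Eventually.of_forall fun ω => (norm_cexp_two_pi_I_mul_mul t ω).le)

lemma invFourierOn_add {w₁ w₂ : ℝ → X} (hw₁ : IntegrableOn w₁ Ω) (hw₂ : IntegrableOn w₂ Ω)
    (t : ℝ) :
    invFourierOn Ω (fun ω => w₁ ω + w₂ ω) t = invFourierOn Ω w₁ t + invFourierOn Ω w₂ t := by
  simp only [invFourierOn, smul_add]
  exact integral_add (hw₁.cexp_two_pi_I_mul_smul t) (hw₂.cexp_two_pi_I_mul_smul t)

lemma _root_.ContinuousLinearMap.map_invFourierOn [CompleteSpace X] (A : X →L[ℂ] X)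
    {w : ℝ → X} (hw : IntegrableOn w Ω) (t : ℝ) :
    A (invFourierOn Ω w t) = invFourierOn Ω (fun ω => A (w ω)) t := by
  simp only [invFourierOn]
  rw [← A.integral_comp_comm (hw.cexp_two_pi_I_mul_smul t)]
  simp only [map_smul]

lemma sum_smul_invFourierOn_add_mul (Z : Finset ℤ) (c : ℤ → ℂ) (Δt : ℝ) {w : ℝ → X}
    (hw : IntegrableOn w Ω) (t : ℝ) :
    ∑ n ∈ Z, c n • invFourierOn Ω w (t + n * Δt) =
      invFourierOn Ω (fun ω =>
        (∑ n ∈ Z, c n * Complex.exp (2 * Real.pi * Complex.I * (n : ℂ) * ω * Δt)) • w ω) t := by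
  simp only [invFourierOn, ← integral_smul]
  rw [← integral_finsetSum]
  · refine integral_congr_ae (Filter.Eventually.of_forall fun ω => ?_)
    simp only [smul_smul, ← Finset.sum_smul, Finset.mul_sum, cexp_two_pi_I_mul_add_mul]
    congr 1
    refine Finset.sum_congr rfl fun n _ => ?_
    push_cast
    rw [show 2 * Real.pi * Complex.I * (n * Δt) * ω =
      2 * Real.pi * Complex.I * (n : ℂ) * ω * Δt by ring]
    ring
  · exact fun n _ => (hw.cexp_two_pi_I_mul_smul _).smul (c n)

end FiniteDifference

open FiniteDifference

theorem stmt9_general {X : Type*} [NormedAddCommGroup X] [NormedSpace ℂ X] [CompleteSpace X]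
    (A : X →L[ℂ] X) (Δt : ℝ)
    (Z : Finset ℤ) (c : ℤ → ℂ) (q : ℝ → ℝ) (Ω : Set ℝ)
    (hq : ∀ ω : ℝ, (2 * Real.pi * Complex.I) * (q ω : ℂ) =
      ∑ n ∈ Z, c n * Complex.exp (2 * Real.pi * Complex.I * (n : ℂ) * ω * Δt))
    (u f : ℝ → X)
    (hrel : ∀ ω : ℝ, (2 * Real.pi * Complex.I * ω) • 𝓕 u ω + A (𝓕 u ω) = 𝓕 f ω)
    (hint : IntegrableOn (fun ω => 𝓕 u (q ω)) Ω)
    (hintf : IntegrableOn (fun ω => 𝓕 f (q ω)) Ω)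
    (v : ℝ → X)
    (hv : ∀ t, v t = ∫ ω in Ω, Complex.exp (2 * Real.pi * Complex.I * t * ω) • 𝓕 u (q ω))
    (t : ℝ) :
    (∑ n ∈ Z, c n • v (t + n * Δt)) + A (v t) =
      ∫ ω in Ω, Complex.exp (2 * Real.pi * Complex.I * t * ω) • 𝓕 f (q ω) := by
  have hv' : v = invFourierOn Ω (fun ω => 𝓕 u (q ω)) := funext hv
  have hAu : IntegrableOn (fun ω => A (𝓕 u (q ω))) Ω := A.integrable_comp hint
  have hDu : IntegrableOn (fun ω => (2 * Real.pi * Complex.I * q ω) • 𝓕 u (q ω)) Ω := by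
    have hDu_eq : (fun ω => (2 * Real.pi * Complex.I * q ω) • 𝓕 u (q ω)) =
        fun ω => 𝓕 f (q ω) - A (𝓕 u (q ω)) :=
      funext fun ω => eq_sub_of_add_eq (hrel (q ω))
    exact hDu_eq ▸ hintf.sub hAu
  calc (∑ n ∈ Z, c n • v (t + n * Δt)) + A (v t)
      = invFourierOn Ω (fun ω => (2 * Real.pi * Complex.I * q ω) • 𝓕 u (q ω)) t +
          invFourierOn Ω (fun ω => A (𝓕 u (q ω))) t := by
        rw [hv', sum_smul_invFourierOn_add_mul Z c Δt hint, A.map_invFourierOn hint]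
        simp only [← hq]
    _ = invFourierOn Ω (fun ω => 𝓕 f (q ω)) t := by
        rw [← invFourierOn_add hDu hAu]
        simp only [hrel]

/-- Forward direction of Theorem 2.2 (K = 1, first order): if `u` solves
`u' + A u = f` in the Fourier sense, then `v` with `v̂ = 1_Ω û∘q` satisfies the
dispersion-corrected finite difference equation `D v + A v = g`, where
`g(t) = ∫_Ω e^{2πitω} f̂(q(ω)) dω`. -/
theorem stmt9 {X : Type*} [NormedAddCommGroup X] [NormedSpace ℂ X] [CompleteSpace X]
    (A : X →L[ℂ] X) (Δt : ℝ) (hΔt : 0 < Δt)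
    (Z : Finset ℤ) (c : ℤ → ℂ) (q : ℝ → ℝ) (Ω : Set ℝ) (hΩ : MeasurableSet Ω)
    (hq : ∀ ω : ℝ, (2 * Real.pi * Complex.I) * (q ω : ℂ) =
      ∑ n ∈ Z, c n * Complex.exp (2 * Real.pi * Complex.I * (n : ℂ) * ω * Δt))
    (u f : ℝ → X) (hu : Integrable u) (hf : Integrable f)
    (hrel : ∀ ω : ℝ, (2 * Real.pi * Complex.I * ω) • 𝓕 u ω + A (𝓕 u ω) = 𝓕 f ω)
    (hint : IntegrableOn (fun ω => 𝓕 u (q ω)) Ω)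
    (hintf : IntegrableOn (fun ω => 𝓕 f (q ω)) Ω)
    (v : ℝ → X)
    (hv : ∀ t, v t = ∫ ω in Ω, Complex.exp (2 * Real.pi * Complex.I * t * ω) • 𝓕 u (q ω))
    (t : ℝ) :
    (∑ n ∈ Z, c n • v (t + n * Δt)) + A (v t) =
      ∫ ω in Ω, Complex.exp (2 * Real.pi * Complex.I * t * ω) • 𝓕 f (q ω) :=
  stmt9_general A Δt Z c q Ω hq u f hrel hint hintf v hv t
end

section
/- Conversely to the forward direction: let D be a finite difference operator with real phase shift function q on Ω, A a bounded linear operator, and v, g integrable functions satisfying D v(t) + A v(t) = g(t) for all t ∈ ℝ, so that (2πi q(ω)) v̂(ω) + A v̂(ω) = ĝ(ω). Define u(t) = ∫_Ω e^{2πit q(ω)} v̂(ω) q'(ω) dω and f(t) = ∫_Ω e^{2πit q(ω)} ĝ(ω) q'(ω) dω (assuming q is C¹ and the integrals converge absolutely and admit differentiation under the integral sign). Then u'(t) + A u(t) = f(t) for all t. -/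
open MeasureTheory Set
open scoped FourierTransform

/-! Differentiating `∫_Ω e^{2πitq(ω)} q'(ω) v̂(ω) dω` under the integral sign (dominated by
`(1 + |q|) |q'| ‖v̂‖`) brings down the factor `2πi q(ω)`, and the Fourier-side equation turns
`2πi q v̂` into `ĝ - A v̂`; since `A` commutes with the Bochner integral, the derivative is
`f(t) - A u(t)`. -/

section DispersionIntegral

open Complex Real

lemma norm_cexp_two_pi_I_mul (s a : ℝ) : ‖cexp (2 * π * I * s * a)‖ = 1 := by
  simpa [mul_comm, mul_left_comm, mul_assoc] using norm_exp_ofReal_mul_I (2 * π * s * a)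

lemma hasDerivAt_cexp_two_pi_I_mul (s a : ℝ) :
    HasDerivAt (fun s : ℝ => cexp (2 * π * I * s * a))
      (cexp (2 * π * I * s * a) * (2 * π * I * a)) s := by
  have hlin : HasDerivAt (fun s : ℝ => (2 * π * I * s * a : ℂ)) (2 * π * I * a) s := by
    simpa using ((hasDerivAt_id s).ofReal_comp.const_mul (2 * π * I)).mul_const (a : ℂ)
  exact hlin.cexp

variable {α X : Type*} [MeasurableSpace α] {μ : Measure α} [NormedAddCommGroup X]

lemma integrable_of_integrable_one_add_abs_mul_norm {φ : α → ℝ} {w : α → X}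
    (hw : AEStronglyMeasurable w μ) (hdom : Integrable (fun ω => (1 + |φ ω|) * ‖w ω‖) μ) :
    Integrable w μ :=
  hdom.mono' hw (ae_of_all _ fun _ =>
    le_mul_of_one_le_left (norm_nonneg _) (le_add_of_nonneg_right (abs_nonneg _)))

variable [NormedSpace ℂ X]

lemma aestronglyMeasurable_cexp_two_pi_I_mul {φ : α → ℝ} (hφ : AEMeasurable φ μ) (t : ℝ) :
    AEStronglyMeasurable (fun ω => cexp (2 * π * I * t * φ ω)) μ := by
  fun_prop

lemma MeasureTheory.Integrable.cexp_two_pi_I_smul {φ : α → ℝ} {w : α → X}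
    (hφ : AEMeasurable φ μ) (hw : Integrable w μ) (t : ℝ) :
    Integrable (fun ω => cexp (2 * π * I * t * φ ω) • w ω) μ :=
  hw.bdd_smul 1 (aestronglyMeasurable_cexp_two_pi_I_mul hφ t)
    (ae_of_all _ fun ω => (norm_cexp_two_pi_I_mul t (φ ω)).le)

theorem hasDerivAt_integral_cexp_two_pi_I_smul {φ : α → ℝ} {w : α → X}
    (hφ : AEMeasurable φ μ) (hw : AEStronglyMeasurable w μ)
    (hdom : Integrable (fun ω => (1 + |φ ω|) * ‖w ω‖) μ) (t : ℝ) :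
    HasDerivAt (fun s : ℝ => ∫ ω, cexp (2 * π * I * s * φ ω) • w ω ∂μ)
      (∫ ω, cexp (2 * π * I * t * φ ω) • ((2 * π * I * φ ω) • w ω) ∂μ) t := by
  have hw_int := integrable_of_integrable_one_add_abs_mul_norm hw hdom
  have hderiv : ∀ ω (s : ℝ), HasDerivAt (fun s : ℝ => cexp (2 * π * I * s * φ ω) • w ω)
      (cexp (2 * π * I * s * φ ω) • ((2 * π * I * φ ω) • w ω)) s := fun ω s => by
    simpa only [mul_smul] using (hasDerivAt_cexp_two_pi_I_mul s (φ ω)).smul_const (w ω)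
  have hbound : ∀ ω (s : ℝ), ‖cexp (2 * π * I * s * φ ω) • ((2 * π * I * φ ω) • w ω)‖ ≤
      2 * π * ((1 + |φ ω|) * ‖w ω‖) := fun ω s => by
    rw [norm_smul, norm_cexp_two_pi_I_mul, one_mul, norm_smul]
    simp only [norm_mul, Complex.norm_ofNat, norm_real, Real.norm_eq_abs, abs_of_pos pi_pos,
      norm_I, mul_one]
    rw [mul_assoc (2 * π)]
    gcongr
    linarith
  exact (hasDerivAt_integral_of_dominated_loc_of_deriv_le Filter.univ_mem
    (Filter.Eventually.of_forall fun s => (hw_int.cexp_two_pi_I_smul hφ s).aestronglyMeasurable)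
    (hw_int.cexp_two_pi_I_smul hφ t)
    ((aestronglyMeasurable_cexp_two_pi_I_mul hφ t).smul
      ((by fun_prop : AEStronglyMeasurable (fun ω => (2 * π * I * φ ω : ℂ)) μ).smul hw))
    (ae_of_all _ fun ω s _ => hbound ω s) (hdom.const_mul _)
    (ae_of_all _ fun ω s _ => hderiv ω s)).2

lemma integral_smul_sub_clm_integral_smul [CompleteSpace X] {c : α → ℂ} {a b : α → X}
    (A : X →L[ℂ] X) (ha : Integrable (fun ω => c ω • a ω) μ)
    (hb : Integrable (fun ω => c ω • b ω) μ) :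
    ∫ ω, c ω • a ω ∂μ - A (∫ ω, c ω • b ω ∂μ) = ∫ ω, c ω • (a ω - A (b ω)) ∂μ := by
  rw [← A.integral_comp_comm hb, ← integral_sub ha (A.integrable_comp hb)]
  simp only [map_smul, smul_sub]

end DispersionIntegral

open Complex Real in
theorem stmt10_general {X : Type*} [NormedAddCommGroup X] [NormedSpace ℂ X] [CompleteSpace X]
    (A : X →L[ℂ] X) (q q' : ℝ → ℝ) (Ω : Set ℝ) (hΩ : MeasurableSet Ω)
    (hq : ∀ ω ∈ Ω, HasDerivAt q (q' ω) ω) (hqC : ContinuousOn q' Ω)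
    (v g : ℝ → X) (hv : Integrable v)
    (hrel : ∀ ω : ℝ, (2 * Real.pi * Complex.I * (q ω : ℂ)) • 𝓕 v ω + A (𝓕 v ω) = 𝓕 g ω)
    (hint : IntegrableOn (fun ω => ((1 + |q ω|) * |q' ω|) • 𝓕 v ω) Ω)
    (hintg : IntegrableOn (fun ω => (q' ω : ℂ) • 𝓕 g ω) Ω)
    (u f : ℝ → X)
    (hu : ∀ t, u t =
      ∫ ω in Ω, (Complex.exp (2 * Real.pi * Complex.I * t * (q ω)) * (q' ω : ℂ)) • 𝓕 v ω)
    (hf : ∀ t, f t =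
      ∫ ω in Ω, (Complex.exp (2 * Real.pi * Complex.I * t * (q ω)) * (q' ω : ℂ)) • 𝓕 g ω) :
    ∀ t, HasDerivAt u (f t - A (u t)) t := by
  intro t
  set w : ℝ → X := fun ω => (q' ω : ℂ) • 𝓕 v ω
  set wg : ℝ → X := fun ω => (q' ω : ℂ) • 𝓕 g ω
  have hq_meas : AEMeasurable q (volume.restrict Ω) :=
    ContinuousOn.aemeasurable (fun ω hω => (hq ω hω).continuousAt.continuousWithinAt) hΩ
  have hw_meas : AEStronglyMeasurable w (volume.restrict Ω) :=
    ((continuous_ofReal.comp_continuousOn hqC).smul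
      (VectorFourier.fourierIntegral_continuous continuous_fourierChar continuous_inner hv
        ).continuousOn).aestronglyMeasurable hΩ
  have hdom : Integrable (fun ω => (1 + |q ω|) * ‖w ω‖) (volume.restrict Ω) :=
    hint.norm.congr (ae_of_all _ fun ω => by
      simp [w, norm_smul, mul_assoc, abs_of_nonneg (by positivity : (0 : ℝ) ≤ 1 + |q ω|)])
  have hu_eq : u = fun s : ℝ => ∫ ω in Ω, cexp (2 * π * I * s * q ω) • w ω :=
    funext fun s => by simp only [hu, w, mul_smul]
  have hrel_w : ∀ ω, wg ω - A (w ω) = (2 * π * I * q ω) • w ω := fun ω => by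
    rw [map_smul, ← smul_sub, ← hrel ω, add_sub_cancel_right, smul_comm]
  have hfu : f t - A (u t) = ∫ ω in Ω, cexp (2 * π * I * t * q ω) • (wg ω - A (w ω)) := by
    rw [hf, hu_eq, ← integral_smul_sub_clm_integral_smul A (hintg.cexp_two_pi_I_smul hq_meas t)
      ((integrable_of_integrable_one_add_abs_mul_norm hw_meas hdom).cexp_two_pi_I_smul hq_meas t)]
    simp only [wg, mul_smul]
  rw [hfu, hu_eq]
  simp only [hrel_w]
  exact hasDerivAt_integral_cexp_two_pi_I_smul hq_meas hw_meas hdom t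

/-- Converse direction of Theorem 2.2 (K = 1, first order): if `v` satisfies the
finite difference equation `D v + A v = g` in the Fourier sense, i.e.
`2πi q(ω) v̂(ω) + A v̂(ω) = ĝ(ω)`, then `u = I(v)` and `f = I(g)` (inverse time
dispersion transforms) satisfy `u' + A u = f`. -/
theorem stmt10 {X : Type*} [NormedAddCommGroup X] [NormedSpace ℂ X] [CompleteSpace X]
    (A : X →L[ℂ] X) (q q' : ℝ → ℝ) (Ω : Set ℝ) (hΩ : MeasurableSet Ω)
    (hq : ∀ ω ∈ Ω, HasDerivAt q (q' ω) ω) (hqC : ContinuousOn q' Ω)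
    (v g : ℝ → X) (hv : Integrable v) (hg : Integrable g)
    (hrel : ∀ ω : ℝ, (2 * Real.pi * Complex.I * (q ω : ℂ)) • 𝓕 v ω + A (𝓕 v ω) = 𝓕 g ω)
    (hint : IntegrableOn (fun ω => ((1 + |q ω|) * |q' ω|) • 𝓕 v ω) Ω)
    (hintg : IntegrableOn (fun ω => (q' ω : ℂ) • 𝓕 g ω) Ω)
    (u f : ℝ → X)
    (hu : ∀ t, u t =
      ∫ ω in Ω, (Complex.exp (2 * Real.pi * Complex.I * t * (q ω)) * (q' ω : ℂ)) • 𝓕 v ω)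
    (hf : ∀ t, f t =
      ∫ ω in Ω, (Complex.exp (2 * Real.pi * Complex.I * t * (q ω)) * (q' ω : ℂ)) • 𝓕 g ω) :
    ∀ t, HasDerivAt u (f t - A (u t)) t :=
  stmt10_general A q q' Ω hΩ hq hqC v g hv hrel hint hintg u f hu hf
end
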